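/- arXiv:1609.06844 — 4 statements merged into one kernel-verified Lean document; each statement's English description precedes it below -/
import Mathlib

section
/- Consider a single good with k ≥ 1 copies allocated to buyers with values v_1, …, v_k and a nondecreasing marginal cost function c on {1,…,k}, with nonnegative total welfare Σ_{n=1}^k (v_n − c(n)) ≥ 0, and suppose the price p* satisfies the profit–surplus equivalence Σ_{n=1}^k (v_n − p*) = p*·k − Σ_{n=1}^k c(n). Then for every t with 1 ≤ t ≤ k, the revenue from selling t copies at price p* covers the production cost of those copies: t·p* ≥ Σ_{n=1}^t c(n). -/
/-!
Profit–surplus equivalence and nonnegative welfare together give `∑ c ≤ k p`: the average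
cost of all `k` copies is at most `p`. Since marginal costs are nondecreasing, the average
cost of the first `t` copies is at most the average over all `k` (Chebyshev's sum
inequality), hence also at most `p`.
-/

open Finset

theorem MonotoneOn.mul_sum_Icc_le_mul_sum_Icc {α : Type*} [CommRing α] [LinearOrder α]
    [IsStrictOrderedRing α] {c : ℕ → α} {k t : ℕ} (hc : MonotoneOn c (Set.Icc 1 k))
    (htk : t ≤ k) :
    (k : α) * ∑ n ∈ Icc 1 t, c n ≤ t * ∑ n ∈ Icc 1 k, c n := by
  let first : ℕ → α := fun n => if n ≤ t then 1 else 0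
  have hanti : AntivaryOn c first (Icc 1 k : Set ℕ) := by
    intro i hi j hj hlt
    simp only [first] at hlt
    split_ifs at hlt <;> norm_num at hlt
    exact hc (by simpa using hj) (by simpa using hi) (by omega)
  have hprefix : ∀ f : ℕ → α, ∑ n ∈ Icc 1 k, f n * first n = ∑ n ∈ Icc 1 t, f n := by
    intro f
    simp only [first, mul_ite, mul_one, mul_zero, sum_ite, sum_const_zero, add_zero]
    congr 1
    ext n
    simp only [mem_filter, mem_Icc]
    omega
  have hcount : ∑ n ∈ Icc 1 k, first n = t := by simpa using hprefix 1
  simpa [hprefix, hcount, mul_comm] using hanti.card_mul_sum_le_sum_mul_sum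

theorem sum_Icc_le_mul_of_surplus_eq_profit {k : ℕ} {v c : ℕ → ℝ} {p : ℝ}
    (hW : 0 ≤ ∑ n ∈ Icc 1 k, (v n - c n))
    (heq : ∑ n ∈ Icc 1 k, (v n - p) = p * k - ∑ n ∈ Icc 1 k, c n) :
    ∑ n ∈ Icc 1 k, c n ≤ k * p := by
  simp only [sum_sub_distrib, sum_const, Nat.card_Icc, add_tsub_cancel_right, nsmul_eq_mul]
    at hW heq
  linarith

theorem revenue_covers_cost_general
    (k : ℕ) (v c : ℕ → ℝ) (p : ℝ)
    (hc_mono : ∀ m n, 1 ≤ m → m ≤ n → n ≤ k → c m ≤ c n)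
    (hW : 0 ≤ ∑ n ∈ Finset.Icc 1 k, (v n - c n))
    (heq : ∑ n ∈ Finset.Icc 1 k, (v n - p) =
      p * k - ∑ n ∈ Finset.Icc 1 k, c n) :
    ∀ t, 1 ≤ t → t ≤ k → ∑ n ∈ Finset.Icc 1 t, c n ≤ (t : ℝ) * p := by
  intro t ht htk
  have hc : MonotoneOn c (Set.Icc 1 k) := fun m hm n hn hmn => hc_mono m n hm.1 hmn hn.2
  have hk : (0 : ℝ) < k := by exact_mod_cast ht.trans htk
  have hcost := sum_Icc_le_mul_of_surplus_eq_profit hW heq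
  refine le_of_mul_le_mul_left ?_ hk
  calc (k : ℝ) * ∑ n ∈ Icc 1 t, c n ≤ t * ∑ n ∈ Icc 1 k, c n :=
        hc.mul_sum_Icc_le_mul_sum_Icc htk
    _ ≤ t * (k * p) := by gcongr
    _ = k * (t * p) := by ring

/-- **Revenue covers cost at any sales level.** With nondecreasing marginal costs
`c`, nonnegative total welfare `∑ (v n − c n) ≥ 0`, and a price `p*` satisfying the
profit–surplus equivalence, the revenue from selling any `t ≤ k` copies at `p*`
covers the cost of producing them: `t·p* ≥ ∑_{n=1}^t c n`. -/
theorem revenue_covers_cost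
    (k : ℕ) (hk : 1 ≤ k) (v c : ℕ → ℝ) (p : ℝ)
    (hc_mono : ∀ m n, 1 ≤ m → m ≤ n → n ≤ k → c m ≤ c n)
    (hW : 0 ≤ ∑ n ∈ Finset.Icc 1 k, (v n - c n))
    (heq : ∑ n ∈ Finset.Icc 1 k, (v n - p) =
      p * k - ∑ n ∈ Finset.Icc 1 k, c n) :
    ∀ t, 1 ≤ t → t ≤ k → ∑ n ∈ Finset.Icc 1 t, c n ≤ (t : ℝ) * p :=
  revenue_covers_cost_general k v c p hc_mono hW heq
end

section
/- Let I be a finite set, let v be a subadditive set function on subsets of I (i.e., v(S ∪ T) ≤ v(S) + v(T) for all S, T ⊆ I), let p be a real number, let A ⊆ I, and let B ⊆ A maximize the utility v(S) − p·|S| over all subsets S ⊆ A. Then for every T ⊆ I, v(B \ T) ≥ p·|B \ T|. -/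
/-!
Split `B` into `B \ T` and `B ∩ T`. Since the item count is additive on this split, subadditivity
of `v` makes the utility `v S - p·|S|` subadditive on it as well. The part `B ∩ T ⊆ A` cannot beat
the demanded bundle `B`, so the other part `B \ T` has nonnegative utility.
-/

section

open Finset

variable {ι : Type*} [DecidableEq ι]

def utility (v : Finset ι → ℝ) (p : ℝ) (S : Finset ι) : ℝ := v S - p * S.card

theorem utility_le_utility_sdiff_add_utility_inter {I : Finset ι} {v : Finset ι → ℝ}
    (hsub : ∀ S T : Finset ι, S ⊆ I → T ⊆ I → v (S ∪ T) ≤ v S + v T) (p : ℝ)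
    {B : Finset ι} (hB : B ⊆ I) (T : Finset ι) :
    utility v p B ≤ utility v p (B \ T) + utility v p (B ∩ T) := by
  have hv : v B ≤ v (B \ T) + v (B ∩ T) := by
    simpa only [sdiff_union_inter] using
      hsub (B \ T) (B ∩ T) (sdiff_subset.trans hB) (inter_subset_left.trans hB)
  have hcard : (B.card : ℝ) = (B \ T).card + (B ∩ T).card := by
    exact_mod_cast (card_sdiff_add_card_inter B T).symm
  simp only [utility, hcard]
  linarith

end

/-- **Demanded bundles retain per-item value (Part I of the structural lemma).**
If `v` is subadditive on subsets of the finite ground set `I`, and `B ⊆ A`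
maximizes the utility `v S − p·|S|` over all `S ⊆ A`, then for every `T ⊆ I`,
`v (B \ T) ≥ p·|B \ T|`. -/
theorem demanded_bundle_retains_value
    {ι : Type*} [DecidableEq ι] (I : Finset ι) (v : Finset ι → ℝ)
    (hsub : ∀ S T : Finset ι, S ⊆ I → T ⊆ I → v (S ∪ T) ≤ v S + v T)
    (p : ℝ) (A : Finset ι) (hA : A ⊆ I) (B : Finset ι) (hB : B ⊆ A)
    (hmax : ∀ S ⊆ A, v S - p * S.card ≤ v B - p * B.card) :
    ∀ T ⊆ I, p * ((B \ T).card : ℝ) ≤ v (B \ T) := by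
  intro T _
  have hsplit := utility_le_utility_sdiff_add_utility_inter hsub p (hB.trans hA) T
  have hdemand : utility v p (B ∩ T) ≤ utility v p B := hmax _ (Finset.inter_subset_left.trans hB)
  have hnonneg : 0 ≤ utility v p (B \ T) := by linarith
  simpa only [utility, sub_nonneg] using hnonneg
end

section
/- Let I be a finite set of M goods with M ≥ 2, and let v be a monotone subadditive set function on subsets of I with v(∅) = 0 (hence v is nonnegative). Then for every A ⊆ I there exist a price p̂ ≥ 0 and a subset B ⊆ A such that: (i) for every T ⊆ I, v(B \ T) ≥ p̂·|B \ T|, and (ii) 2e·log₂(M)·p̂·|B| ≥ v(A). -/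
/-!
If `B` maximizes the utility `v T - p * #T` among its subsets, subadditivity gives
`v S ≥ p * #S` for every `S ⊆ B`. Starting from `A`, post the price `v A / (L * #A)` with
`L = log₂ M`: the demanded set keeps value at least `(1 - 1/L) v A`, and either it is more than half
of the current set, so it pays at least `v A / (2L)`, or the size halves and we repeat. Sizes halve
at most `log₂ #A ≤ L` times and `(1 - 1/L)^(L-1) ≥ 1/e`, which gives the factor `2eL`. When
`M ≤ 3`, so that `L < 2`, the most valuable single good already suffices.
-/

open Real Finset

theorem exp_neg_one_le_one_sub_inv_rpow {L : ℝ} (hL : 1 < L) : exp (-1) ≤ (1 - L⁻¹) ^ (L - 1) := by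
  have hq : 0 < 1 - L⁻¹ := sub_pos.2 (inv_lt_one_of_one_lt₀ hL)
  rw [rpow_def_of_pos hq, exp_le_exp]
  have hL0 : L ≠ 0 := by linarith
  have hL1 : L - 1 ≠ 0 := by linarith
  calc (-1 : ℝ) = (1 - (1 - L⁻¹)⁻¹) * (L - 1) := by
        field_simp
        ring
    _ ≤ log (1 - L⁻¹) * (L - 1) :=
        mul_le_mul_of_nonneg_right (one_sub_inv_le_log_of_pos hq) (by linarith)

theorem rpow_logb_le_mul_rpow_logb {q m n : ℝ} (hq0 : 0 < q) (hq1 : q ≤ 1) (hm : 0 < m)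
    (hmn : 2 * m ≤ n) : q ^ logb 2 n ≤ q * q ^ logb 2 m := by
  have hlog : logb 2 m + 1 ≤ logb 2 n := by
    calc logb 2 m + 1 = logb 2 (2 * m) := by
          rw [logb_mul two_ne_zero hm.ne', logb_self_eq_one one_lt_two, add_comm]
      _ ≤ logb 2 n := logb_le_logb_of_le one_lt_two (by positivity) hmn
  calc q ^ logb 2 n ≤ q ^ (logb 2 m + 1) := rpow_le_rpow_of_exponent_ge hq0 hq1 hlog
    _ = q * q ^ logb 2 m := by rw [rpow_add_one hq0.ne', mul_comm]

theorem rpow_logb_le_of_lt_two_mul {q : ℝ} (hq0 : 0 < q) (hq1 : q ≤ 1) (hq : 1 / 2 ≤ q)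
    {m n : ℕ} (hm : 0 < m) (hmn : m ≤ n) (hn : n < 2 * m) :
    q ^ logb 2 n ≤ 2 * q * m / n := by
  have hn0 : (0 : ℝ) < n := by exact_mod_cast hm.trans_le hmn
  rw [le_div_iff₀ hn0]
  rcases (show n = 1 ∨ 2 ≤ n by omega) with rfl | hn2
  · obtain rfl : m = 1 := by omega
    simp only [Nat.cast_one, logb_one, rpow_zero, mul_one]
    linarith
  · have hlog : 1 ≤ logb 2 n := by
      rw [← logb_self_eq_one one_lt_two (b := 2)]
      exact logb_le_logb_of_le one_lt_two two_pos (by exact_mod_cast hn2)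
    have hqn : q ^ logb 2 n ≤ q := by
      simpa using rpow_le_rpow_of_exponent_ge hq0 hq1 hlog
    have : (n : ℝ) < 2 * m := by exact_mod_cast hn
    nlinarith

namespace SubadditiveValuation

variable {ι : Type*} {I A B : Finset ι} {v : Finset ι → ℝ} {p : ℝ}

def SubadditiveOn [DecidableEq ι] (I : Finset ι) (v : Finset ι → ℝ) : Prop :=
  ∀ S T : Finset ι, S ⊆ I → T ⊆ I → v (S ∪ T) ≤ v S + v T

def SupportsPrice (v : Finset ι → ℝ) (p : ℝ) (B : Finset ι) : Prop :=
  ∀ S ⊆ B, p * #S ≤ v S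

theorem supportsPrice_empty (h0 : 0 ≤ v ∅) : SupportsPrice v p ∅ := by
  intro S hS
  simpa [subset_empty.1 hS] using h0

theorem supportsPrice_singleton (h0 : 0 ≤ v ∅) (x : ι) : SupportsPrice v (v {x}) {x} := by
  intro S hS
  rcases subset_singleton_iff.1 hS with rfl | rfl <;> simp [h0]

theorem exists_demand (v : Finset ι → ℝ) (p : ℝ) (A : Finset ι) :
    ∃ B ⊆ A, ∀ T ⊆ A, v T - p * #T ≤ v B - p * #B := by
  obtain ⟨B, hB, hmax⟩ := exists_max_image A.powerset (fun T => v T - p * #T)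
    ⟨∅, empty_mem_powerset A⟩
  exact ⟨B, mem_powerset.1 hB, fun T hT => hmax T (mem_powerset.2 hT)⟩

namespace SubadditiveOn

variable [DecidableEq ι]

theorem nonneg (hv : SubadditiveOn I v) {S : Finset ι} (hS : S ⊆ I) : 0 ≤ v S := by
  have := hv S S hS hS
  rw [union_self] at this
  linarith

theorem le_sum_singleton (hv : SubadditiveOn I v) (h0 : v ∅ = 0) (hA : A ⊆ I) :
    v A ≤ ∑ i ∈ A, v {i} := by
  induction A using Finset.induction_on with
  | empty => simp [h0]
  | insert a s ha ih =>
    rw [sum_insert ha]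
    rw [insert_eq] at hA ⊢
    obtain ⟨haI, hsI⟩ := union_subset_iff.1 hA
    linarith [hv _ _ haI hsI, ih hsI]

-- Removing `S` from `B` loses at most `v S` in value and saves `p * #S` in payment.
theorem supportsPrice_of_demand (hv : SubadditiveOn I v) (hBI : B ⊆ I)
    (hB : ∀ T ⊆ B, v T - p * #T ≤ v B - p * #B) : SupportsPrice v p B := by
  intro S hS
  have hsplit : v B ≤ v (B \ S) + v S := by
    simpa [sdiff_union_of_subset hS] using hv (B \ S) S (sdiff_subset.trans hBI) (hS.trans hBI)
  have hcard : (#(B \ S) : ℝ) = #B - #S := by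
    rw [card_sdiff_of_subset hS, Nat.cast_sub (card_le_card hS)]
  have := hB (B \ S) sdiff_subset
  rw [hcard] at this
  linarith

theorem exists_supportsPrice_le_card_mul (hv : SubadditiveOn I v) (h0 : v ∅ = 0) (hA : A ⊆ I) :
    ∃ p B, 0 ≤ p ∧ B ⊆ A ∧ SupportsPrice v p B ∧ v A ≤ #A * (p * #B) := by
  rcases A.eq_empty_or_nonempty with rfl | hAne
  · exact ⟨0, ∅, le_rfl, subset_rfl, supportsPrice_empty h0.ge, by simp [h0]⟩
  obtain ⟨x, hxA, hxmax⟩ := exists_max_image A (fun i => v {i}) hAne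
  refine ⟨v {x}, {x}, hv.nonneg (singleton_subset_iff.2 (hA hxA)), singleton_subset_iff.2 hxA,
    supportsPrice_singleton h0.ge x, ?_⟩
  calc v A ≤ ∑ i ∈ A, v {i} := hv.le_sum_singleton h0 hA
    _ ≤ #A • v {x} := sum_le_card_nsmul A _ _ hxmax
    _ = #A * (v {x} * #{x}) := by simp

-- At the price `v A / (L * #A)` the demanded set `B` keeps a `1 - L⁻¹` fraction of `v A`: if `B`
-- is more than half of `A` it pays enough, otherwise recurse into `B`, whose size has halved.
theorem exists_supportsPrice_mul_rpow_logb_le (hv : SubadditiveOn I v) (h0 : v ∅ = 0) {L : ℝ}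
    (hL : 2 ≤ L) (hA : A ⊆ I) :
    ∃ p B, 0 ≤ p ∧ B ⊆ A ∧ SupportsPrice v p B ∧
      v A * (1 - L⁻¹) ^ logb 2 #A ≤ 2 * (L - 1) * (p * #B) := by
  have hLinv : L⁻¹ ≤ 2⁻¹ := inv_anti₀ two_pos hL
  have hq0 : 0 < 1 - L⁻¹ := by linarith
  have hq1 : 1 - L⁻¹ ≤ 1 := sub_le_self 1 (by positivity)
  induction A using Finset.strongInduction with
  | H A ih =>
  rcases le_or_gt (v A) 0 with hvA | hvA
  · refine ⟨0, ∅, le_rfl, empty_subset A, supportsPrice_empty h0.ge, ?_⟩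
    simpa using mul_nonpos_of_nonpos_of_nonneg hvA (rpow_nonneg hq0.le _)
  have hAne : A.Nonempty := nonempty_iff_ne_empty.2 (by rintro rfl; linarith)
  have hA0 : (0 : ℝ) < #A := by exact_mod_cast hAne.card_pos
  set p := v A / (L * #A) with hp
  have hpA : p * #A = L⁻¹ * v A := by
    rw [hp]
    field_simp
  obtain ⟨B, hBA, hB⟩ := exists_demand v p A
  have hsupp : SupportsPrice v p B :=
    hv.supportsPrice_of_demand (hBA.trans hA) fun T hT => hB T (hT.trans hBA)
  have hvB : (1 - L⁻¹) * v A ≤ v B - p * #B := by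
    linarith [hB A subset_rfl]
  rcases lt_or_ge #A (2 * #B) with hhalf | hhalf
  · refine ⟨p, B, by positivity, hBA, hsupp, ?_⟩
    have hBne : 0 < #B := by omega
    calc v A * (1 - L⁻¹) ^ logb 2 #A ≤ v A * (2 * (1 - L⁻¹) * #B / #A) :=
          mul_le_mul_of_nonneg_left
            (rpow_logb_le_of_lt_two_mul hq0 hq1 (by linarith) hBne (card_le_card hBA) hhalf)
            hvA.le
      _ = 2 * (L - 1) * (p * #B) := by
          rw [hp]
          field_simp
  · have hBne : B.Nonempty := by
      rw [nonempty_iff_ne_empty]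
      rintro rfl
      simp only [h0, card_empty, CharP.cast_eq_zero, mul_zero, sub_zero] at hvB
      linarith [mul_pos hq0 hvA]
    have hB0 : (0 : ℝ) < #B := by exact_mod_cast hBne.card_pos
    have hBA' : B ⊂ A := hBA.ssubset_of_ne (by rintro rfl; have := hBne.card_pos; omega)
    obtain ⟨p', B', hp', hB'B, hsupp', hbound⟩ := ih B hBA' (hBA.trans hA)
    refine ⟨p', B', hp', hB'B.trans hBA, hsupp', le_trans ?_ hbound⟩
    calc v A * (1 - L⁻¹) ^ logb 2 #A
        ≤ v A * ((1 - L⁻¹) * (1 - L⁻¹) ^ logb 2 #B) :=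
          mul_le_mul_of_nonneg_left
            (rpow_logb_le_mul_rpow_logb hq0 hq1 hB0 (by exact_mod_cast hhalf)) hvA.le
      _ = (1 - L⁻¹) * v A * (1 - L⁻¹) ^ logb 2 #B := by ring
      _ ≤ v B * (1 - L⁻¹) ^ logb 2 #B := by
          gcongr
          have : 0 ≤ p * #B := by positivity
          linarith

theorem exists_supportsPrice_le_two_exp_mul (hv : SubadditiveOn I v) (h0 : v ∅ = 0) {L : ℝ}
    (hL : 2 ≤ L) (hA : A ⊆ I) (hAL : logb 2 #A ≤ L) :
    ∃ p B, 0 ≤ p ∧ B ⊆ A ∧ SupportsPrice v p B ∧ v A ≤ 2 * exp 1 * L * (p * #B) := by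
  obtain ⟨p, B, hp, hBA, hsupp, hbound⟩ := hv.exists_supportsPrice_mul_rpow_logb_le h0 hL hA
  refine ⟨p, B, hp, hBA, hsupp, ?_⟩
  have hL0 : L ≠ 0 := by linarith
  have hL1 : 0 < L - 1 := by linarith
  have hq : 1 - L⁻¹ = (L - 1) / L := by field_simp
  have hq0 : 0 < 1 - L⁻¹ := by rw [hq]; positivity
  have hq1 : 1 - L⁻¹ ≤ 1 := sub_le_self 1 (by positivity)
  have hdecay : exp (-1) * (1 - L⁻¹) ≤ (1 - L⁻¹) ^ logb 2 #A :=
    calc exp (-1) * (1 - L⁻¹) ≤ (1 - L⁻¹) ^ (L - 1) * (1 - L⁻¹) := by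
          gcongr
          exact exp_neg_one_le_one_sub_inv_rpow (by linarith)
      _ = (1 - L⁻¹) ^ L := by rw [← rpow_add_one hq0.ne', sub_add_cancel]
      _ ≤ (1 - L⁻¹) ^ logb 2 #A := rpow_le_rpow_of_exponent_ge hq0 hq1 hAL
  have key : v A * (exp (-1) * ((L - 1) / L)) ≤ 2 * (L - 1) * (p * #B) := by
    rw [← hq]
    exact (mul_le_mul_of_nonneg_left hdecay (hv.nonneg hA)).trans hbound
  calc v A = exp 1 * L / (L - 1) * (v A * (exp (-1) * ((L - 1) / L))) := by
        rw [exp_neg]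
        field_simp
    _ ≤ exp 1 * L / (L - 1) * (2 * (L - 1) * (p * #B)) := by gcongr
    _ = 2 * exp 1 * L * (p * #B) := by
        field_simp

end SubadditiveOn

end SubadditiveValuation

open SubadditiveValuation in
theorem subadditive_structural_lemma_general
    {ι : Type*} [DecidableEq ι] (I : Finset ι) (hM : 2 ≤ I.card)
    (v : Finset ι → ℝ)
    (hsub : ∀ S T : Finset ι, S ⊆ I → T ⊆ I → v (S ∪ T) ≤ v S + v T)
    (h0 : v ∅ = 0) :
    ∀ A ⊆ I, ∃ (p : ℝ) (B : Finset ι), 0 ≤ p ∧ B ⊆ A ∧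
      (∀ T ⊆ I, p * ((B \ T).card : ℝ) ≤ v (B \ T)) ∧
      v A ≤ 2 * Real.exp 1 * Real.logb 2 I.card * (p * B.card) := by
  intro A hA
  have hv : SubadditiveOn I v := hsub
  have hI0 : (0 : ℝ) < #I := by positivity
  have hlogI : ∀ x : ℝ, (2 : ℝ) ^ x ≤ #I → x ≤ logb 2 #I := fun x hx =>
    (le_logb_iff_rpow_le one_lt_two hI0).2 hx
  obtain ⟨p, B, hp, hBA, hsupp, hvA⟩ : ∃ p B, 0 ≤ p ∧ B ⊆ A ∧ SupportsPrice v p B ∧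
      v A ≤ 2 * exp 1 * logb 2 #I * (p * #B) := by
    rcases le_or_gt #I 3 with hI | hI
    · obtain ⟨p, B, hp, hBA, hsupp, hvA⟩ := hv.exists_supportsPrice_le_card_mul h0 hA
      refine ⟨p, B, hp, hBA, hsupp, hvA.trans (mul_le_mul_of_nonneg_right ?_ (by positivity))⟩
      have hA3 : (#A : ℝ) ≤ 3 := by exact_mod_cast (card_le_card hA).trans hI
      have he : 2 ≤ exp 1 := by linarith [add_one_le_exp 1]
      have hL : 1 ≤ logb 2 #I := hlogI 1 (by rw [rpow_one]; exact_mod_cast hM)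
      nlinarith
    · have hL : 2 ≤ logb 2 #I := hlogI 2 (by norm_num; exact_mod_cast hI)
      refine hv.exists_supportsPrice_le_two_exp_mul h0 hL hA ?_
      rcases (#A).eq_zero_or_pos with hA0 | hA0
      · rw [hA0, Nat.cast_zero, logb_zero]
        linarith
      · exact logb_le_logb_of_le one_lt_two (by exact_mod_cast hA0)
          (by exact_mod_cast card_le_card hA)
  exact ⟨p, B, hp, hBA, fun T _ => hsupp _ sdiff_subset, hvA⟩

/-- **Structural lemma for subadditive valuations.** Let `I` be a finite set of
`M ≥ 2` goods and `v` a monotone subadditive set function with `v ∅ = 0`. Then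
for every `A ⊆ I` there exist a price `p̂ ≥ 0` and `B ⊆ A` such that
(i) `v (B \ T) ≥ p̂·|B \ T|` for all `T ⊆ I`, and
(ii) `2e·log₂(M)·p̂·|B| ≥ v A`. -/
theorem subadditive_structural_lemma
    {ι : Type*} [DecidableEq ι] (I : Finset ι) (hM : 2 ≤ I.card)
    (v : Finset ι → ℝ)
    (hsub : ∀ S T : Finset ι, S ⊆ I → T ⊆ I → v (S ∪ T) ≤ v S + v T)
    (hmono : ∀ S T : Finset ι, S ⊆ T → T ⊆ I → v S ≤ v T)
    (h0 : v ∅ = 0) :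
    ∀ A ⊆ I, ∃ (p : ℝ) (B : Finset ι), 0 ≤ p ∧ B ⊆ A ∧
      (∀ T ⊆ I, p * ((B \ T).card : ℝ) ≤ v (B \ T)) ∧
      v A ≤ 2 * Real.exp 1 * Real.logb 2 I.card * (p * B.card) :=
  subadditive_structural_lemma_general I hM v hsub h0
end

section
/- Let I be a finite set of M goods with M ≥ 2, let v_1, …, v_N be monotone subadditive set functions on subsets of I with v_j(∅) = 0 for each j, and let (A_1, …, A_N) be pairwise disjoint subsets of I (an allocation). Then there exist prices p̂¹, …, p̂ᴺ ≥ 0 and subsets B_j ⊆ A_j such that: (i) for every buyer j and every T ⊆ I, v_j(B_j \ T) ≥ p̂ʲ·|B_j \ T|, and (ii) 2e·log₂(M)·Σ_{j=1}^N p̂ʲ·|B_j| ≥ Σ_{j=1}^N v_j(A_j). -/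
/-!
Peel off, inside a buyer's bundle `A`, a nonempty subset `S₀` of minimum average value
`p₀ = v S₀ / |S₀|`; every subset `S` of `A` then has `v S ≥ p₀ |S|`. Recurse on `A \ S₀` and keep the
better of the two candidates `(p₀, A)` and the recursive one. By subadditivity
`v A ≤ v S₀ + v (A \ S₀)`, and since `|S₀| ≤ |A| (H_{|A|} - H_{|A \ S₀|})`, the value lost at each
step is paid for by a telescoping increment of harmonic numbers, so `v A ≤ H_{|A|} · p |B|`.
Finally `H_M ≤ 1 + ln M ≤ 2 log₂ M` for `M ≥ 2`.
-/

open Finset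

lemma harmonic_monotone : Monotone harmonic :=
  monotone_nat_of_le_succ fun n => by
    rw [harmonic_succ]
    exact le_add_of_nonneg_right (by positivity)

lemma harmonic_nonneg (n : ℕ) : 0 ≤ harmonic n :=
  harmonic_zero ▸ harmonic_monotone n.zero_le

lemma sub_le_mul_harmonic_sub {m n : ℕ} (h : m ≤ n) :
    (n - m : ℚ) ≤ n * (harmonic n - harmonic m) := by
  calc (n - m : ℚ) = ∑ _i ∈ Ico m n, (1 : ℚ) := by simp [Nat.cast_sub h]
    _ ≤ ∑ i ∈ Ico m n, (n : ℚ) * (↑(i + 1))⁻¹ := by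
        refine sum_le_sum fun i hi => ?_
        have hin : ((i + 1 : ℕ) : ℚ) ≤ n := by exact_mod_cast (mem_Ico.1 hi).2
        rw [← div_eq_mul_inv, one_le_div (by positivity)]
        exact hin
    _ = n * (harmonic n - harmonic m) := by
        rw [← mul_sum, harmonic, harmonic, sum_Ico_eq_sub _ h]

lemma harmonic_le_two_mul_logb {n : ℕ} (hn : 2 ≤ n) :
    (harmonic n : ℝ) ≤ 2 * Real.logb 2 n := by
  have hn' : (2 : ℝ) ≤ n := by exact_mod_cast hn
  have hlog2 : 0 < Real.log 2 := Real.log_pos one_lt_two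
  have hone : 1 ≤ Real.logb 2 n := by
    rw [Real.le_logb_iff_rpow_le one_lt_two (by linarith)]
    simpa using hn'
  have hlog : Real.log n ≤ Real.logb 2 n := by
    rw [Real.logb, le_div_iff₀ hlog2]
    have hlogn : 0 ≤ Real.log n := Real.log_nonneg (by linarith)
    have : Real.log 2 ≤ 1 := by linarith [Real.log_two_lt_d9]
    nlinarith
  linarith [harmonic_le_one_add_log n]

lemma card_le_card_mul_harmonic_sub_sdiff {ι : Type*} [DecidableEq ι] {S A : Finset ι}
    (h : S ⊆ A) : (#S : ℚ) ≤ #A * (harmonic #A - harmonic #(A \ S)) := by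
  have hcard : (#A : ℚ) - #(A \ S) = #S := by
    rw [← card_sdiff_add_card_eq_card h]
    push_cast
    ring
  simpa [hcard] using sub_le_mul_harmonic_sub (card_le_card (sdiff_subset : A \ S ⊆ A))

section SingleBuyer

variable {ι : Type*} {v : Finset ι → ℝ}

lemma exists_min_average_subset {A : Finset ι} (hA : A.Nonempty) (hv : ∀ S ⊆ A, 0 ≤ v S) :
    ∃ S₀ ⊆ A, S₀.Nonempty ∧ ∀ S ⊆ A, v S₀ / #S₀ * #S ≤ v S := by
  obtain ⟨S₀, hS₀, hmin⟩ := exists_min_image ({S ∈ A.powerset | S.Nonempty})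
    (fun S => v S / #S) ⟨A, by simp [hA]⟩
  rw [mem_filter, mem_powerset] at hS₀
  refine ⟨S₀, hS₀.1, hS₀.2, fun S hS => ?_⟩
  rcases S.eq_empty_or_nonempty with rfl | hSne
  · simpa using hv ∅ (empty_subset A)
  · have hScard : (0 : ℝ) < #S := by exact_mod_cast hSne.card_pos
    calc v S₀ / #S₀ * #S ≤ v S / #S * #S :=
          mul_le_mul_of_nonneg_right (hmin S (by simp [hS, hSne])) hScard.le
      _ = v S := div_mul_cancel₀ _ hScard.ne'

theorem exists_price_subset_le_harmonic_mul [DecidableEq ι] {A : Finset ι}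
    (hsub : ∀ S ⊆ A, ∀ T ⊆ A, v (S ∪ T) ≤ v S + v T)
    (hv : ∀ S ⊆ A, 0 ≤ v S) (h0 : v ∅ = 0) :
    ∃ (p : ℝ) (B : Finset ι), 0 ≤ p ∧ B ⊆ A ∧ (∀ S ⊆ B, p * #S ≤ v S) ∧
      v A ≤ harmonic #A * (p * #B) := by
  induction A using Finset.strongInduction with
  | H A ih =>
  rcases A.eq_empty_or_nonempty with rfl | hA
  · exact ⟨0, ∅, le_rfl, empty_subset _, by simp [h0], by simp [h0]⟩
  obtain ⟨S₀, hS₀A, hS₀, hS₀min⟩ := exists_min_average_subset hA hv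
  set p₀ := v S₀ / #S₀
  have hp₀ : 0 ≤ p₀ := div_nonneg (hv S₀ hS₀A) (Nat.cast_nonneg _)
  have hvS₀ : v S₀ = p₀ * #S₀ :=
    (div_mul_cancel₀ _ (Nat.cast_ne_zero.2 hS₀.card_pos.ne')).symm
  have hA' : A \ S₀ ⊂ A := sdiff_ssubset hS₀A hS₀
  obtain ⟨p', B', hp', hB', hB'sup, hvA'⟩ := ih _ hA'
    (fun S hS T hT => hsub S (hS.trans hA'.subset) T (hT.trans hA'.subset))
    (fun S hS => hv S (hS.trans hA'.subset))
  have hgap : (#S₀ : ℝ) ≤ #A * ((harmonic #A : ℝ) - harmonic #(A \ S₀)) := by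
    exact_mod_cast card_le_card_mul_harmonic_sub_sdiff hS₀A
  have hH : (0 : ℝ) ≤ harmonic #(A \ S₀) := by exact_mod_cast harmonic_nonneg _
  have hvA : v A ≤ harmonic #A * max (p₀ * #A) (p' * #B') := by
    have hsplit : v A ≤ v S₀ + v (A \ S₀) := by
      simpa [union_sdiff_of_subset hS₀A] using hsub S₀ hS₀A (A \ S₀) hA'.subset
    have hgap_nonneg : (0 : ℝ) ≤ harmonic #A - harmonic #(A \ S₀) := by
      exact_mod_cast sub_nonneg.2 (harmonic_monotone (card_le_card hA'.subset))
    calc v A ≤ p₀ * #S₀ + harmonic #(A \ S₀) * (p' * #B') := by linarith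
      _ ≤ (p₀ * #A) * (harmonic #A - harmonic #(A \ S₀))
            + harmonic #(A \ S₀) * (p' * #B') := by
          gcongr ?_ + _
          rw [mul_assoc]
          exact mul_le_mul_of_nonneg_left hgap hp₀
      _ ≤ max (p₀ * #A) (p' * #B') * (harmonic #A - harmonic #(A \ S₀))
            + harmonic #(A \ S₀) * max (p₀ * #A) (p' * #B') := by
          gcongr
          exacts [le_max_left _ _, le_max_right _ _]
      _ = harmonic #A * max (p₀ * #A) (p' * #B') := by ring
  rcases max_choice (p₀ * #A) (p' * #B') with hmax | hmax <;> rw [hmax] at hvA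
  · exact ⟨p₀, A, hp₀, subset_rfl, hS₀min, hvA⟩
  · exact ⟨p', B', hp', hB'.trans hA'.subset, hB'sup, hvA⟩

end SingleBuyer

theorem subadditive_structural_corollary_general
    {ι : Type*} [DecidableEq ι] (I : Finset ι) (hM : 2 ≤ I.card)
    (N : ℕ) (v : Fin N → Finset ι → ℝ)
    (hsub : ∀ j, ∀ S T : Finset ι, S ⊆ I → T ⊆ I → v j (S ∪ T) ≤ v j S + v j T)
    (hmono : ∀ j, ∀ S T : Finset ι, S ⊆ T → T ⊆ I → v j S ≤ v j T)
    (h0 : ∀ j, v j ∅ = 0)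
    (A : Fin N → Finset ι) (hA : ∀ j, A j ⊆ I) :
    ∃ (p : Fin N → ℝ) (B : Fin N → Finset ι),
      (∀ j, 0 ≤ p j) ∧ (∀ j, B j ⊆ A j) ∧
      (∀ j, ∀ T ⊆ I, p j * (((B j) \ T).card : ℝ) ≤ v j ((B j) \ T)) ∧
      ∑ j, v j (A j) ≤
        2 * Real.exp 1 * Real.logb 2 I.card * ∑ j, p j * ((B j).card : ℝ) := by
  have hbuyer j := exists_price_subset_le_harmonic_mul (v := v j) (A := A j)
    (fun S hS T hT => hsub j S T (hS.trans (hA j)) (hT.trans (hA j)))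
    (fun S hS => h0 j ▸ hmono j ∅ S (empty_subset S) (hS.trans (hA j))) (h0 j)
  choose p B hp hBA hpB hvA using hbuyer
  refine ⟨p, B, hp, hBA, fun j T _ => hpB j _ sdiff_subset, ?_⟩
  have hH j : (harmonic #(A j) : ℝ) ≤ 2 * Real.exp 1 * Real.logb 2 #I := by
    have hlogb : 0 ≤ Real.logb 2 #I :=
      Real.logb_nonneg one_lt_two (by exact_mod_cast (by omega : 1 ≤ #I))
    calc (harmonic #(A j) : ℝ) ≤ harmonic #I := by
          exact_mod_cast harmonic_monotone (card_le_card (hA j))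
      _ ≤ 2 * Real.logb 2 #I := harmonic_le_two_mul_logb hM
      _ ≤ 2 * Real.exp 1 * Real.logb 2 #I := by
          gcongr
          exact le_mul_of_one_le_right zero_le_two (Real.one_le_exp zero_le_one)
  rw [mul_sum]
  exact sum_le_sum fun j _ =>
    (hvA j).trans (mul_le_mul_of_nonneg_right (hH j) (mul_nonneg (hp j) (Nat.cast_nonneg _)))

/-- **Structural corollary for allocations to subadditive buyers.** Let `I` be a
finite set of `M ≥ 2` goods, `v 1, …, v N` monotone subadditive normalized set
functions, and `(A 1, …, A N)` pairwise disjoint bundles in `I`. Then there are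
prices `p̂ j ≥ 0` and sub-bundles `B j ⊆ A j` with
(i) `v j (B j \ T) ≥ p̂ j · |B j \ T|` for all `j` and `T ⊆ I`, and
(ii) `2e·log₂(M)·∑ j, p̂ j·|B j| ≥ ∑ j, v j (A j)`. -/
theorem subadditive_structural_corollary
    {ι : Type*} [DecidableEq ι] (I : Finset ι) (hM : 2 ≤ I.card)
    (N : ℕ) (v : Fin N → Finset ι → ℝ)
    (hsub : ∀ j, ∀ S T : Finset ι, S ⊆ I → T ⊆ I → v j (S ∪ T) ≤ v j S + v j T)
    (hmono : ∀ j, ∀ S T : Finset ι, S ⊆ T → T ⊆ I → v j S ≤ v j T)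
    (h0 : ∀ j, v j ∅ = 0)
    (A : Fin N → Finset ι) (hA : ∀ j, A j ⊆ I)
    (hdisj : ∀ j j', j ≠ j' → Disjoint (A j) (A j')) :
    ∃ (p : Fin N → ℝ) (B : Fin N → Finset ι),
      (∀ j, 0 ≤ p j) ∧ (∀ j, B j ⊆ A j) ∧
      (∀ j, ∀ T ⊆ I, p j * (((B j) \ T).card : ℝ) ≤ v j ((B j) \ T)) ∧
      ∑ j, v j (A j) ≤
        2 * Real.exp 1 * Real.logb 2 I.card * ∑ j, p j * ((B j).card : ℝ) :=
  subadditive_structural_corollary_general I hM N v hsub hmono h0 A hA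
end
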